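/- Let R and S be nonnegative real vectors in ℝ^n with equal component sums. There exists an n×n nonnegative real matrix A with row sum vector R and column sum vector S that is invariant under transposition about the antidiagonal (i.e. a_{i,j} = a_{n+1−j, n+1−i} for all i,j) if and only if S = R^r, the reversal of R. Moreover, if R and S have nonnegative integer components, there exists such a matrix with nonnegative integer entries if and only if S = R^r. -/

import Mathlib

/-!
Reversing the summation index turns the `j`-th column sum of an `r_{+1}`-invariant matrix into
its `j.rev`-th row sum, so `S = Rʳ` is necessary. Conversely, the matrix carrying `R i` at
position `(i, i.rev)` and `0` elsewhere is `r_{+1}`-invariant with row sums `R` and column sums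
`Rʳ`; it is nonnegative, and integral when `R` is.
-/

namespace Matrix

variable {α : Type*} {n : ℕ}

theorem sum_col_eq_sum_row_rev [AddCommMonoid α] {A : Matrix (Fin n) (Fin n) α}
    (hA : ∀ i j, A i j = A j.rev i.rev) (j : Fin n) :
    ∑ i, A i j = ∑ k, A j.rev k := by
  simp_rw [hA _ j]
  exact Equiv.sum_comp Fin.revPerm (A j.rev)

def revDiagonal [Zero α] (d : Fin n → α) : Matrix (Fin n) (Fin n) α :=
  of fun i j => if j = i.rev then d i else 0

theorem revDiagonal_apply_rev_rev [Zero α] (d : Fin n → α) (i j : Fin n) :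
    revDiagonal d i j = revDiagonal d j.rev i.rev := by
  simp only [revDiagonal, of_apply, Fin.rev_rev, Fin.rev_eq_iff]
  by_cases h : j = i.rev
  · simp [h]
  · rw [if_neg h, if_neg (fun h' => h (by rw [h', Fin.rev_rev]))]

theorem sum_revDiagonal_row [AddCommMonoid α] (d : Fin n → α) (i : Fin n) :
    ∑ j, revDiagonal d i j = d i := by
  simp [revDiagonal]

theorem sum_revDiagonal_col [AddCommMonoid α] (d : Fin n → α) (j : Fin n) :
    ∑ i, revDiagonal d i j = d j.rev := by
  rw [sum_col_eq_sum_row_rev (revDiagonal_apply_rev_rev d), sum_revDiagonal_row]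

theorem revDiagonal_nonneg [Zero α] [Preorder α] {d : Fin n → α} (hd : ∀ i, 0 ≤ d i)
    (i j : Fin n) : 0 ≤ revDiagonal d i j := by
  simp only [revDiagonal, of_apply]
  split_ifs
  exacts [hd i, le_rfl]

end Matrix

open Matrix

theorem antisymmetric_transportation (n : ℕ) (R S : Fin n → ℝ)
    (hR : ∀ i, 0 ≤ R i) :
    ((∃ A : Matrix (Fin n) (Fin n) ℝ,
        (∀ i j, 0 ≤ A i j) ∧
        (∀ i, ∑ j, A i j = R i) ∧
        (∀ j, ∑ i, A i j = S j) ∧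
        (∀ i j, A i j = A j.rev i.rev)) ↔ (∀ j, S j = R j.rev))
    ∧ ((∀ i, ∃ k : ℕ, R i = k) → (∀ j, ∃ k : ℕ, S j = k) →
      ((∃ A : Matrix (Fin n) (Fin n) ℕ,
          (∀ i, ((∑ j, A i j : ℕ) : ℝ) = R i) ∧
          (∀ j, ((∑ i, A i j : ℕ) : ℝ) = S j) ∧
          (∀ i j, A i j = A j.rev i.rev)) ↔ (∀ j, S j = R j.rev))) := by
  refine ⟨⟨?_, fun hSR => ?_⟩, fun hRℕ _ => ⟨?_, fun hSR => ?_⟩⟩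
  · rintro ⟨A, -, hrow, hcol, hA⟩ j
    rw [← hcol, ← hrow, sum_col_eq_sum_row_rev hA]
  · refine ⟨revDiagonal R, revDiagonal_nonneg hR, sum_revDiagonal_row R, fun j => ?_,
      revDiagonal_apply_rev_rev R⟩
    rw [sum_revDiagonal_col, hSR]
  · rintro ⟨A, hrow, hcol, hA⟩ j
    rw [← hcol, ← hrow, sum_col_eq_sum_row_rev hA]
  · choose d hd using hRℕ
    refine ⟨revDiagonal d, fun i => ?_, fun j => ?_, revDiagonal_apply_rev_rev d⟩
    · rw [sum_revDiagonal_row, hd]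
    · rw [sum_revDiagonal_col, hSR, hd]
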